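/- arXiv:1904.11246 — 5 statements merged into one kernel-verified Lean document; each statement's English description precedes it below -/
import Mathlib

section
/- Let v : ℝ → ℝ be a C¹ solution on [t₀, ∞) of the scalar ODE v' = -a·v² + b·v·exp(-δ₁·(t-t₀)) + c·exp(-δ₂·(t-t₀)) with v(t₀) = v₀ ≥ 0, where a, b, c, δ₁, δ₂ > 0. Then v(t) ≥ 0 for all t ≥ t₀, v is bounded on [t₀, ∞), and lim_{t→∞} v(t) = 0. -/
/-!
The equation is a Riccati equation `v' = -a v² + β v + ζ` with forcing `β, ζ` bounded and
decaying to `0`. Each claim is a barrier argument: at `v = 0` the derivative is `ζ > 0`; at a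
large level `M` the term `-a M²` beats `β M + ζ`; and once the forcing is below `a ε² / 2`,
`v` decreases at a uniform rate while `v ≥ ε`, so it reaches `ε` and can never cross it again.
-/

open Real Filter Topology Set

section Barrier

variable {f f' : ℝ → ℝ} {t₀ m : ℝ}

theorem le_of_deriv_neg_at_level (hf : ∀ t, t₀ ≤ t → HasDerivAt f (f' t) t) (h₀ : f t₀ ≤ m)
    (hm : ∀ t, t₀ ≤ t → f t = m → f' t < 0) {t : ℝ} (ht : t₀ ≤ t) : f t ≤ m :=
  image_le_of_deriv_right_lt_deriv_boundary' (B := fun _ => m) (B' := 0)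
    (fun s hs => (hf s hs.1).continuousAt.continuousWithinAt)
    (fun s hs => (hf s hs.1).hasDerivWithinAt) h₀ continuousOn_const
    (fun _ _ => hasDerivWithinAt_const _ _ _) (fun s hs => hm s hs.1) ⟨ht, le_rfl⟩

theorem le_of_deriv_pos_at_level (hf : ∀ t, t₀ ≤ t → HasDerivAt f (f' t) t) (h₀ : m ≤ f t₀)
    (hm : ∀ t, t₀ ≤ t → f t = m → 0 < f' t) {t : ℝ} (ht : t₀ ≤ t) : m ≤ f t := by
  have := le_of_deriv_neg_at_level (f := fun s => -f s) (f' := fun s => -f' s) (m := -m)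
    (fun s hs => (hf s hs).neg) (neg_le_neg h₀)
    (fun s hs hfs => neg_neg_of_pos (hm s hs (neg_inj.1 hfs))) ht
  exact neg_le_neg_iff.1 this

variable {ε k L : ℝ}

theorem exists_le_of_deriv_le_neg (hk : 0 < k) (hf : ∀ t, t₀ ≤ t → HasDerivAt f (f' t) t)
    (hf' : ∀ t, t₀ ≤ t → ε ≤ f t → f' t ≤ -k) (hL : ∀ t, t₀ ≤ t → L ≤ f t) :
    ∃ t, t₀ ≤ t ∧ f t ≤ ε := by
  by_contra! hgt
  have hdecay : ∀ t, t₀ ≤ t → f t - f t₀ ≤ -k * (t - t₀) := fun t ht =>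
    (convex_Ici t₀).image_sub_le_mul_sub_of_deriv_le
      (fun s hs => (hf s hs).continuousAt.continuousWithinAt)
      (fun s hs => (hf s (interior_subset hs)).differentiableAt.differentiableWithinAt)
      (fun s hs => by
        have hs' : t₀ ≤ s := interior_subset hs
        rw [(hf s hs').deriv]
        exact hf' s hs' (hgt s hs').le)
      t₀ self_mem_Ici t ht ht
  set t := t₀ + (f t₀ - L + 1) / k
  have ht : t₀ ≤ t := le_add_of_nonneg_right (div_nonneg (by linarith [hL t₀ le_rfl]) hk.le)
  have hkt : k * (t - t₀) = f t₀ - L + 1 := by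
    simp only [t, add_sub_cancel_left]
    field_simp
  linarith [hdecay t ht, hL t ht]

theorem eventually_le_of_deriv_le_neg (hk : 0 < k) (hf : ∀ t, t₀ ≤ t → HasDerivAt f (f' t) t)
    (hf' : ∀ t, t₀ ≤ t → ε ≤ f t → f' t ≤ -k) (hL : ∀ t, t₀ ≤ t → L ≤ f t) :
    ∀ᶠ t in atTop, f t ≤ ε := by
  obtain ⟨T, hT, hfT⟩ := exists_le_of_deriv_le_neg hk hf hf' hL
  filter_upwards [eventually_ge_atTop T] with t ht
  exact le_of_deriv_neg_at_level (fun s hs => hf s (hT.trans hs)) hfT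
    (fun s hs hfs => (hf' s (hT.trans hs) hfs.ge).trans_lt (neg_neg_of_pos hk)) ht

end Barrier

theorem exists_mul_add_lt_mul_sq {a : ℝ} (ha : 0 < a) (B C x : ℝ) :
    ∃ M, x ≤ M ∧ 0 ≤ M ∧ B * M + C < a * M ^ 2 := by
  set M := max x 1 + (|B| + |C|) / a
  have hM1 : 1 ≤ M := le_add_of_le_of_nonneg (le_max_right x 1) (by positivity)
  have haM : |B| + |C| < a * M := by
    have : a * M = a * max x 1 + (|B| + |C|) := by simp only [M]; field_simp
    nlinarith [le_max_right x 1]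
  refine ⟨M, le_add_of_le_of_nonneg (le_max_left x 1) (by positivity), by linarith, ?_⟩
  calc B * M + C ≤ |B| * M + |C| * M := by
        gcongr
        · exact le_abs_self B
        · nlinarith [le_abs_self C, abs_nonneg C]
    _ = (|B| + |C|) * M := by ring
    _ < a * M * M := by gcongr
    _ = a * M ^ 2 := by ring

section Riccati

variable {v β ζ : ℝ → ℝ} {a t₀ : ℝ}

theorem riccati_nonneg (hode : ∀ t, t₀ ≤ t → HasDerivAt v (-a * v t ^ 2 + β t * v t + ζ t) t)
    (hζ : ∀ t, t₀ ≤ t → 0 < ζ t) (h₀ : 0 ≤ v t₀) {t : ℝ} (ht : t₀ ≤ t) : 0 ≤ v t :=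
  le_of_deriv_pos_at_level hode h₀ (fun s hs hvs => by simpa [hvs] using hζ s hs) ht

theorem riccati_bddAbove (ha : 0 < a)
    (hode : ∀ t, t₀ ≤ t → HasDerivAt v (-a * v t ^ 2 + β t * v t + ζ t) t)
    {B C : ℝ} (hβ : ∀ t, t₀ ≤ t → β t ≤ B) (hζ : ∀ t, t₀ ≤ t → ζ t ≤ C) :
    ∃ M, ∀ t, t₀ ≤ t → v t ≤ M := by
  obtain ⟨M, hvM, hM, hquad⟩ := exists_mul_add_lt_mul_sq ha B C (v t₀)
  refine ⟨M, fun t ht => le_of_deriv_neg_at_level hode hvM (fun s hs hvs => ?_) ht⟩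
  rw [hvs]
  nlinarith [mul_le_mul_of_nonneg_right (hβ s hs) hM, hζ s hs]

theorem riccati_tendsto_zero (ha : 0 < a)
    (hode : ∀ t, t₀ ≤ t → HasDerivAt v (-a * v t ^ 2 + β t * v t + ζ t) t)
    (hβ : Tendsto β atTop (𝓝 0)) (hζ : Tendsto ζ atTop (𝓝 0))
    (hv₀ : ∀ t, t₀ ≤ t → 0 ≤ v t) {M : ℝ} (hvM : ∀ t, t₀ ≤ t → v t ≤ M) :
    Tendsto v atTop (𝓝 0) := by
  have hv_bdd : IsBoundedUnder (· ≤ ·) atTop (norm ∘ v) :=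
    isBoundedUnder_of_eventually_le (a := M) <| by
      filter_upwards [eventually_ge_atTop t₀] with t ht
      simpa [abs_of_nonneg (hv₀ t ht)] using hvM t ht
  have hforcing : Tendsto (fun t => β t * v t + ζ t) atTop (𝓝 0) := by
    simpa using (hβ.zero_mul_isBoundedUnder_le hv_bdd).add hζ
  have hsmall : ∀ ε, 0 < ε → ∀ᶠ t in atTop, v t ≤ ε := by
    intro ε hε
    obtain ⟨T, hT⟩ := eventually_atTop.1 <|
      (hforcing.eventually (gt_mem_nhds (by positivity : 0 < a * ε ^ 2 / 2))).and
        (eventually_ge_atTop t₀)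
    refine eventually_le_of_deriv_le_neg (by positivity : 0 < a * ε ^ 2 / 2)
      (fun t ht => hode t ((hT T le_rfl).2.trans ht)) (fun t ht hεv => ?_)
      (fun t ht => hv₀ t ((hT T le_rfl).2.trans ht))
    have hsq : a * ε ^ 2 ≤ a * v t ^ 2 :=
      mul_le_mul_of_nonneg_left (pow_le_pow_left₀ hε.le hεv 2) ha.le
    nlinarith [(hT t ht).1]
  refine tendsto_order.2 ⟨fun x hx => ?_, fun x hx => ?_⟩
  · filter_upwards [eventually_ge_atTop t₀] with t ht
    exact hx.trans_le (hv₀ t ht)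
  · filter_upwards [hsmall (x / 2) (by linarith)] with t ht
    linarith

end Riccati

theorem tendsto_const_mul_exp_neg_mul_sub {δ : ℝ} (hδ : 0 < δ) (c t₀ : ℝ) :
    Tendsto (fun t => c * exp (-δ * (t - t₀))) atTop (𝓝 0) := by
  have : Tendsto (fun t => -δ * (t - t₀)) atTop atBot :=
    (tendsto_const_mul_atBot_of_neg (neg_lt_zero.2 hδ)).2
      (tendsto_atTop_add_const_right _ _ tendsto_id)
  simpa using (tendsto_exp_atBot.comp this).const_mul c

theorem const_mul_exp_neg_mul_sub_le {c δ t₀ t : ℝ} (hc : 0 ≤ c) (hδ : 0 ≤ δ) (ht : t₀ ≤ t) :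
    c * exp (-δ * (t - t₀)) ≤ c :=
  mul_le_of_le_one_right hc <| exp_le_one_iff.2 <| by nlinarith

theorem stmt0_general (a b c δ₁ δ₂ t₀ v₀ : ℝ)
    (ha : 0 < a) (hb : 0 < b) (hc : 0 < c) (hδ₁ : 0 < δ₁) (hδ₂ : 0 < δ₂)
    (hv₀ : 0 ≤ v₀) (v : ℝ → ℝ)
    (hode : ∀ t, t₀ ≤ t → HasDerivAt v
      (-a * (v t) ^ 2 + b * v t * Real.exp (-δ₁ * (t - t₀)) + c * Real.exp (-δ₂ * (t - t₀))) t)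
    (hinit : v t₀ = v₀) :
    (∀ t, t₀ ≤ t → 0 ≤ v t) ∧
    (∃ M : ℝ, ∀ t, t₀ ≤ t → v t ≤ M) ∧
    Tendsto v atTop (nhds 0) := by
  have hode' : ∀ t, t₀ ≤ t → HasDerivAt v (-a * v t ^ 2 + b * exp (-δ₁ * (t - t₀)) * v t
      + c * exp (-δ₂ * (t - t₀))) t :=
    fun t ht => (hode t ht).congr_deriv (by ring)
  have hnonneg : ∀ t, t₀ ≤ t → 0 ≤ v t :=
    fun t => riccati_nonneg hode' (fun s _ => by positivity) (hinit ▸ hv₀)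
  obtain ⟨M, hM⟩ := riccati_bddAbove ha hode'
    (fun t ht => const_mul_exp_neg_mul_sub_le hb.le hδ₁.le ht)
    (fun t ht => const_mul_exp_neg_mul_sub_le hc.le hδ₂.le ht)
  exact ⟨hnonneg, ⟨M, hM⟩, riccati_tendsto_zero ha hode'
    (tendsto_const_mul_exp_neg_mul_sub hδ₁ b t₀) (tendsto_const_mul_exp_neg_mul_sub hδ₂ c t₀)
    hnonneg hM⟩

/-- Scalar comparison lemma (Lemma 1 of the paper): nonnegativity, boundedness and
convergence to zero of solutions of `v' = -a v² + b v e^{-δ₁(t-t₀)} + c e^{-δ₂(t-t₀)}`. -/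
theorem stmt0 (a b c δ₁ δ₂ t₀ v₀ : ℝ)
    (ha : 0 < a) (hb : 0 < b) (hc : 0 < c) (hδ₁ : 0 < δ₁) (hδ₂ : 0 < δ₂)
    (hv₀ : 0 ≤ v₀) (v : ℝ → ℝ)
    (hC1 : ContDiff ℝ 1 v)
    (hode : ∀ t, t₀ ≤ t → HasDerivAt v
      (-a * (v t) ^ 2 + b * v t * Real.exp (-δ₁ * (t - t₀)) + c * Real.exp (-δ₂ * (t - t₀))) t)
    (hinit : v t₀ = v₀) :
    (∀ t, t₀ ≤ t → 0 ≤ v t) ∧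
    (∃ M : ℝ, ∀ t, t₀ ≤ t → v t ≤ M) ∧
    Tendsto v atTop (nhds 0) :=
  stmt0_general a b c δ₁ δ₂ t₀ v₀ ha hb hc hδ₁ hδ₂ hv₀ v hode hinit
end

section
/- Let g : ℝ≥0 × ℝⁿ → ℝⁿ be such that solutions of ẋ = g(t,x) exist uniquely on [t₀, ∞) for all initial conditions. Suppose there exists a C¹ function V : ℝ≥0 × ℝⁿ → ℝ, constants a₁, a₂, a₃ > 0, b > 0, c > 0, δ₁, δ₂ > 0 such that a₁‖x‖² ≤ V(t,x) ≤ a₂‖x‖² and ∂V/∂t + ∇ₓV · g(t,x) ≤ -a₃‖x‖² + b‖x‖e^{-δ₁(t-t₀)} + c·e^{-δ₂(t-t₀)} for all t ≥ t₀ and x ∈ ℝⁿ. Then every solution x(t) of ẋ = g(t,x) satisfies lim_{t→∞} x(t) = 0. -/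
open Real Filter Set

/-!
Along a solution `x`, the function `v t = V (t, x t)` satisfies
`v' + k v ≤ C e^{-δ (t - t₀)}` with `δ = min δ₁ δ₂` and any `0 < k ≤ a₃ / (2 a₂)`: Young's
inequality absorbs the cross term `b ‖x‖ e^{-δ₁ (t - t₀)}` into half of `-a₃ ‖x‖²`, and the other
half dominates `k v`. Taking also `k < δ`, the function `v e^{k (t - t₀)} + C / (δ - k) e^{-(δ - k) (t - t₀)}`
is antitone, so `v`, hence `a₁ ‖x‖²`, decays like `e^{-k (t - t₀)}`.
-/

theorem le_mul_exp_of_hasDerivAt_add_mul_le {v v' : ℝ → ℝ} {t₀ k δ C : ℝ}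
    (hkδ : k < δ) (hC : 0 ≤ C) (hv : ∀ t, t₀ ≤ t → HasDerivAt v (v' t) t)
    (hineq : ∀ t, t₀ ≤ t → v' t + k * v t ≤ C * exp (-δ * (t - t₀)))
    {t : ℝ} (ht : t₀ ≤ t) :
    v t ≤ (v t₀ + C / (δ - k)) * exp (-k * (t - t₀)) := by
  have hδk : 0 < δ - k := sub_pos.mpr hkδ
  set u : ℝ → ℝ := fun s => v s * exp (k * (s - t₀)) + C / (δ - k) * exp (-(δ - k) * (s - t₀))
  have hu : ∀ s, t₀ ≤ s → HasDerivAt u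
      ((v' s + k * v s) * exp (k * (s - t₀)) - C * exp (-(δ - k) * (s - t₀))) s := by
    intro s hs
    have hlin : ∀ m : ℝ, HasDerivAt (fun r => m * (r - t₀)) m s := fun m => by
      simpa using ((hasDerivAt_id s).sub_const t₀).const_mul m
    refine (((hv s hs).mul (hlin k).exp).add
      (((hlin (-(δ - k))).exp).const_mul (C / (δ - k)))).congr_deriv ?_
    have hcancel : C / (δ - k) * (δ - k) = C := div_mul_cancel₀ C hδk.ne'
    linear_combination -exp (-(δ - k) * (s - t₀)) * hcancel
  have hanti : AntitoneOn u (Ici t₀) := by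
    refine antitoneOn_of_hasDerivWithinAt_nonpos (convex_Ici t₀)
      (fun s hs => (hu s hs).continuousAt.continuousWithinAt)
      (fun s hs => (hu s (interior_subset hs)).hasDerivWithinAt) fun s hs => ?_
    replace hs : t₀ ≤ s := interior_subset hs
    rw [sub_nonpos]
    calc (v' s + k * v s) * exp (k * (s - t₀))
        ≤ C * exp (-δ * (s - t₀)) * exp (k * (s - t₀)) :=
          mul_le_mul_of_nonneg_right (hineq s hs) (exp_pos _).le
      _ = C * exp (-(δ - k) * (s - t₀)) := by rw [mul_assoc, ← exp_add]; ring_nf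
  have hut : v t * exp (k * (t - t₀)) ≤ v t₀ + C / (δ - k) := by
    have hmono : u t ≤ u t₀ := hanti self_mem_Ici ht ht
    have htail : 0 ≤ C / (δ - k) * exp (-(δ - k) * (t - t₀)) := by positivity
    simp only [u, sub_self, mul_zero, exp_zero, mul_one] at hmono
    linarith
  calc v t = v t * exp (k * (t - t₀)) * exp (-k * (t - t₀)) := by
        rw [mul_assoc, ← exp_add]; ring_nf; simp
    _ ≤ (v t₀ + C / (δ - k)) * exp (-k * (t - t₀)) :=
        mul_le_mul_of_nonneg_right hut (exp_pos _).le

theorem add_mul_le_of_le_neg_sq_add_exp {D W X s a₂ a₃ b c k δ δ₁ δ₂ : ℝ}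
    (ha₃ : 0 < a₃) (hc : 0 ≤ c) (hk : 0 ≤ k) (hka : k * (2 * a₂) ≤ a₃) (hs : 0 ≤ s)
    (hδ₁ : δ ≤ 2 * δ₁) (hδ₂ : δ ≤ δ₂) (hW : W ≤ a₂ * X ^ 2)
    (hD : D ≤ -a₃ * X ^ 2 + b * X * exp (-δ₁ * s) + c * exp (-δ₂ * s)) :
    D + k * W ≤ (b ^ 2 / (2 * a₃) + c) * exp (-δ * s) := by
  set E := exp (-δ₁ * s)
  have hyoung : b * X * E ≤ a₃ / 2 * X ^ 2 + b ^ 2 / (2 * a₃) * E ^ 2 := by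
    rw [← sub_nonneg]
    have heq : a₃ / 2 * X ^ 2 + b ^ 2 / (2 * a₃) * E ^ 2 - b * X * E
        = (a₃ * X - b * E) ^ 2 / (2 * a₃) := by field_simp; ring
    rw [heq]; positivity
  have hE : E ^ 2 ≤ exp (-δ * s) := by
    rw [← exp_nat_mul, exp_le_exp]; push_cast; nlinarith
  have hE₂ : exp (-δ₂ * s) ≤ exp (-δ * s) := exp_le_exp.mpr (by nlinarith)
  have hkW : k * W ≤ a₃ / 2 * X ^ 2 := by
    nlinarith [mul_le_mul_of_nonneg_left hW hk, sq_nonneg X]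
  nlinarith [mul_le_mul_of_nonneg_left hE (by positivity : 0 ≤ b ^ 2 / (2 * a₃)),
    mul_le_mul_of_nonneg_left hE₂ hc]

theorem tendsto_nhds_zero_of_mul_sq_norm_le_mul_exp {E : Type*} [SeminormedAddCommGroup E]
    {x : ℝ → E} {a M k t₀ : ℝ} (ha : 0 < a) (hk : 0 < k)
    (h : ∀ t, t₀ ≤ t → a * ‖x t‖ ^ 2 ≤ M * exp (-k * (t - t₀))) :
    Tendsto x atTop (nhds 0) := by
  have hexp : Tendsto (fun t => M / a * exp (-k * (t - t₀))) atTop (nhds 0) := by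
    have hlin : Tendsto (fun t => -k * (t - t₀)) atTop atBot :=
      (tendsto_atTop_add_const_right atTop (-t₀) tendsto_id).const_mul_atTop_of_neg (neg_lt_zero.mpr hk) |>.congr fun t => by simp only [id]; ring
    simpa using (tendsto_exp_atBot.comp hlin).const_mul (M / a)
  have hsq : Tendsto (fun t => ‖x t‖ ^ 2) atTop (nhds 0) :=
    squeeze_zero' (Eventually.of_forall fun t => by positivity)
      (eventually_atTop.mpr ⟨t₀, fun t ht => by
        rw [div_mul_eq_mul_div, le_div_iff₀ ha, mul_comm]; exact h t ht⟩) hexp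
  rw [tendsto_zero_iff_norm_tendsto_zero]
  simpa [sqrt_sq (norm_nonneg _)] using hsq.sqrt

theorem stmt2_general {n : ℕ} (g : ℝ → EuclideanSpace ℝ (Fin n) → EuclideanSpace ℝ (Fin n))
    (t₀ : ℝ)
    (V : ℝ × EuclideanSpace ℝ (Fin n) → ℝ) (hV : ContDiff ℝ 1 V)
    (a₁ a₂ a₃ b c δ₁ δ₂ : ℝ)
    (ha₁ : 0 < a₁) (ha₂ : 0 < a₂) (ha₃ : 0 < a₃) (hc : 0 < c)
    (hδ₁ : 0 < δ₁) (hδ₂ : 0 < δ₂)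
    (hbound : ∀ t, t₀ ≤ t → ∀ x : EuclideanSpace ℝ (Fin n),
      a₁ * ‖x‖ ^ 2 ≤ V (t, x) ∧ V (t, x) ≤ a₂ * ‖x‖ ^ 2)
    (hder : ∀ t, t₀ ≤ t → ∀ x : EuclideanSpace ℝ (Fin n),
      fderiv ℝ V (t, x) (1, g t x) ≤
        -a₃ * ‖x‖ ^ 2 + b * ‖x‖ * Real.exp (-δ₁ * (t - t₀)) + c * Real.exp (-δ₂ * (t - t₀))) :
    ∀ x : ℝ → EuclideanSpace ℝ (Fin n),
      (∀ t, t₀ ≤ t → HasDerivAt x (g t (x t)) t) →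
      Tendsto x atTop (nhds 0) := by
  intro x hx
  set δ := min δ₁ δ₂
  set k := min (a₃ / (2 * a₂)) (δ / 2)
  have hδ : 0 < δ := lt_min hδ₁ hδ₂
  have hk : 0 < k := lt_min (by positivity) (half_pos hδ)
  have hka : k * (2 * a₂) ≤ a₃ := (le_div_iff₀ (by positivity)).mp (min_le_left _ _)
  have hkδ : k < δ := (min_le_right _ _).trans_lt (half_lt_self hδ)
  have hv : ∀ t, t₀ ≤ t →
      HasDerivAt (fun s => V (s, x s)) (fderiv ℝ V (t, x t) (1, g t (x t))) t := fun t ht =>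
    (hV.differentiable one_ne_zero (t, x t)).hasFDerivAt.comp_hasDerivAt t
      ((hasDerivAt_id t).prodMk (hx t ht))
  have hineq : ∀ t, t₀ ≤ t → fderiv ℝ V (t, x t) (1, g t (x t)) + k * V (t, x t) ≤
      (b ^ 2 / (2 * a₃) + c) * exp (-δ * (t - t₀)) := fun t ht =>
    add_mul_le_of_le_neg_sq_add_exp ha₃ hc.le hk.le hka (sub_nonneg.mpr ht)
      ((min_le_left _ _).trans (by linarith)) (min_le_right _ _) (hbound t ht (x t)).2
      (hder t ht (x t))
  exact tendsto_nhds_zero_of_mul_sq_norm_le_mul_exp ha₁ hk fun t ht =>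
    (hbound t ht (x t)).1.trans
      (le_mul_exp_of_hasDerivAt_add_mul_le hkδ (by positivity) hv hineq ht)

/-- Lemma 2 of the paper: Lyapunov-type convergence criterion for time-varying systems
with sign-indefinite but exponentially-decaying-perturbed Lyapunov derivative. -/
theorem stmt2 {n : ℕ} (g : ℝ → EuclideanSpace ℝ (Fin n) → EuclideanSpace ℝ (Fin n))
    (t₀ : ℝ) (ht₀ : 0 ≤ t₀)
    (V : ℝ × EuclideanSpace ℝ (Fin n) → ℝ) (hV : ContDiff ℝ 1 V)
    (a₁ a₂ a₃ b c δ₁ δ₂ : ℝ)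
    (ha₁ : 0 < a₁) (ha₂ : 0 < a₂) (ha₃ : 0 < a₃) (hb : 0 < b) (hc : 0 < c)
    (hδ₁ : 0 < δ₁) (hδ₂ : 0 < δ₂)
    (hbound : ∀ t, t₀ ≤ t → ∀ x : EuclideanSpace ℝ (Fin n),
      a₁ * ‖x‖ ^ 2 ≤ V (t, x) ∧ V (t, x) ≤ a₂ * ‖x‖ ^ 2)
    (hder : ∀ t, t₀ ≤ t → ∀ x : EuclideanSpace ℝ (Fin n),
      fderiv ℝ V (t, x) (1, g t x) ≤
        -a₃ * ‖x‖ ^ 2 + b * ‖x‖ * Real.exp (-δ₁ * (t - t₀)) + c * Real.exp (-δ₂ * (t - t₀))) :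
    ∀ x : ℝ → EuclideanSpace ℝ (Fin n),
      (∀ t, t₀ ≤ t → HasDerivAt x (g t (x t)) t) →
      Tendsto x atTop (nhds 0) :=
  stmt2_general g t₀ V hV a₁ a₂ a₃ b c δ₁ δ₂ ha₁ ha₂ ha₃ hc hδ₁ hδ₂ hbound hder
end

section
/- Let L be an irreducible weight-balanced n×n Laplacian (L𝟙 = Lᵀ𝟙 = 0, off-diagonal entries ≤ 0, and the symmetric part L + Lᵀ is positive semidefinite with kernel exactly span(𝟙)). Let Φ, Σ, Δ be diagonal positive matrices, γ ∈ ℝⁿ, and η = 𝟙ᵀx₀/n. Then for the time-varying Lyapunov function V(t,x) = (x - η𝟙)ᵀ(I + Φe^{-Σt})(x - η𝟙), evaluated along solutions of ẋ = -L(I + Φe^{-Σt})(x + e^{-Δt}γ) with 𝟙ᵀx₀ = nη, there exist a > 0, b > 0, c > 0 and δ > 0 such that V̇ ≤ -a‖x - η𝟙‖² + b‖x - η𝟙‖e^{-δt} + c·e^{-δt} for all t ≥ 0. -/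
open Real Filter Matrix

open Finset

/-!
Write `z = x - η𝟙` and `m = 𝟙 + Φe^{-Σt}` for the diagonal of `I + Φe^{-Σt}`. Since `𝟙ᵀL = 0` the
sum of `x` is conserved, so `𝟙ᵀz = 0`; since `L𝟙 = 0` the vector field is `-L(m ⊙ z + r)` with a
residual `r = O(e^{-δt})`, `δ = min(Σ, Δ)`. Discarding the nonpositive contribution of `ṁ`,
`V̇ ≤ -(m ⊙ z)ᵀ(L + Lᵀ)(m ⊙ z) - 2(m ⊙ z)ᵀLr`.

The quadratic term is at least `λ‖m ⊙ z - c𝟙‖²`, where `c𝟙` is the mean of `m ⊙ z` and `λ > 0` the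
spectral gap of `L + Lᵀ` on `𝟙^⊥`. As `m ≥ 1` and `𝟙ᵀz = 0`,
`‖z‖² ≤ zᵀ(m ⊙ z - c𝟙) ≤ ‖z‖‖m ⊙ z - c𝟙‖`, so it is at least `λ‖z‖²`. The cross term is bounded
entrywise by a multiple of `‖z‖e^{-δt}`.
-/

theorem exists_pos_mul_norm_sq_le {E : Type*} [NormedAddCommGroup E] [NormedSpace ℝ E]
    [FiniteDimensional ℝ E] {f : E → ℝ} (hf : Continuous f)
    (hsmul : ∀ (c : ℝ) (x : E), f (c • x) = c ^ 2 * f x) (hpos : ∀ x, x ≠ 0 → 0 < f x) :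
    ∃ μ > 0, ∀ x, μ * ‖x‖ ^ 2 ≤ f x := by
  have hf0 : f 0 = 0 := by simpa using hsmul 0 0
  rcases subsingleton_or_nontrivial E with hE | hE
  · exact ⟨1, one_pos, fun x => by simp [Subsingleton.elim x 0, hf0]⟩
  obtain ⟨x₀, hx₀, hmin⟩ := (isCompact_sphere (0 : E) 1).exists_isMinOn
    (NormedSpace.sphere_nonempty.2 zero_le_one) hf.continuousOn
  refine ⟨f x₀, hpos x₀ (ne_zero_of_mem_unit_sphere ⟨x₀, hx₀⟩), fun x => ?_⟩
  rcases eq_or_ne x 0 with rfl | hx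
  · simp [hf0]
  have hnorm : 0 < ‖x‖ := norm_pos_iff.2 hx
  have hmem : ‖x‖⁻¹ • x ∈ Metric.sphere (0 : E) 1 := by simp [norm_smul, hnorm.ne']
  calc f x₀ * ‖x‖ ^ 2 ≤ f (‖x‖⁻¹ • x) * ‖x‖ ^ 2 := by gcongr; exact hmin hmem
    _ = f x := by rw [hsmul]; field_simp

theorem Finite.exists_pos_forall_le {ι : Type*} [Finite ι] {f : ι → ℝ} (hf : ∀ i, 0 < f i) :
    ∃ δ > 0, ∀ i, δ ≤ f i := by
  have h : ∀ᶠ δ in nhdsWithin (0 : ℝ) (Set.Ioi 0), 0 < δ ∧ ∀ i, δ ≤ f i :=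
    eventually_mem_nhdsWithin.and <| nhdsWithin_le_nhds <|
      eventually_all.2 fun i => (eventually_lt_nhds (hf i)).mono fun _ => le_of_lt
  exact h.exists

theorem Finset.abs_le_sqrt_sum_sq {ι : Type*} [Fintype ι] (z : ι → ℝ) (i : ι) :
    |z i| ≤ √(∑ j, z j ^ 2) :=
  abs_le_sqrt (single_le_sum (fun j _ => sq_nonneg (z j)) (mem_univ i))

theorem Finset.sum_sq_le_sum_mul_sub_sq {ι : Type*} [Fintype ι] {z m : ι → ℝ}
    (hz : ∑ i, z i = 0) (hm : ∀ i, 1 ≤ m i) (c : ℝ) :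
    ∑ i, z i ^ 2 ≤ ∑ i, (m i * z i - c) ^ 2 := by
  have hinner : ∑ i, z i ^ 2 ≤ ∑ i, z i * (m i * z i - c) := by
    have : ∑ i, z i * (m i * z i - c) = ∑ i, m i * z i ^ 2 := by
      simp only [mul_sub, sum_sub_distrib, ← sum_mul, hz, zero_mul, sub_zero]
      exact sum_congr rfl fun i _ => by ring
    rw [this]
    exact sum_le_sum fun i _ => le_mul_of_one_le_left (sq_nonneg _) (hm i)
  have hcs := sum_mul_sq_le_sq_mul_sq univ z fun i => m i * z i - c
  have hA : 0 ≤ ∑ i, z i ^ 2 := sum_nonneg fun i _ => sq_nonneg (z i)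
  rcases hA.eq_or_lt with h0 | hpos
  · rw [← h0]
    positivity
  · refine le_of_mul_le_mul_left ?_ hpos
    nlinarith [mul_self_le_mul_self hA hinner]

theorem HasDerivAt.sum_mul_sub_sq {ι : Type*} [Fintype ι] {x : ℝ → ι → ℝ} {x' : ι → ℝ}
    {m : ι → ℝ → ℝ} {m' : ι → ℝ} {t : ℝ} (hx : HasDerivAt x x' t)
    (hm : ∀ i, HasDerivAt (m i) (m' i) t) (η : ℝ) :
    HasDerivAt (fun s => ∑ i, m i s * (x s i - η) ^ 2)
      (∑ i, (m' i * (x t i - η) ^ 2 + m i t * (2 * (x t i - η) * x' i))) t := by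
  refine HasDerivAt.fun_sum fun i _ => ?_
  refine ((hm i).fun_mul (((hasDerivAt_pi.1 hx i).sub_const η).fun_pow 2)).congr_deriv ?_
  push_cast
  ring

theorem hasDerivAt_one_add_mul_exp (Φ a t : ℝ) :
    HasDerivAt (fun s => 1 + Φ * exp (-a * s)) (-(Φ * a * exp (-a * t))) t := by
  refine ((((hasDerivAt_id' t).const_mul (-a)).exp.const_mul Φ).const_add 1).congr_deriv ?_
  ring

theorem sum_eq_of_hasDerivAt_of_sum_eq_zero {ι : Type*} [Fintype ι] {x x' : ℝ → ι → ℝ}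
    (hx : ∀ t, HasDerivAt x (x' t) t) (h : ∀ t, ∑ i, x' t i = 0) (s t : ℝ) :
    ∑ i, x s i = ∑ i, x t i := by
  have hsum (t : ℝ) : HasDerivAt (fun s => ∑ i, x s i) 0 t := by
    simpa [h t] using HasDerivAt.fun_sum (u := univ) fun i _ => hasDerivAt_pi.1 (hx t) i
  exact is_const_of_deriv_eq_zero (fun t => (hsum t).differentiableAt) (fun t => (hsum t).deriv) s t

namespace Matrix

theorem abs_dotProduct_mulVec_le {ι κ : Type*} [Fintype ι] [Fintype κ] {A : Matrix ι κ ℝ}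
    {u a : ι → ℝ} {w b : κ → ℝ} {r s : ℝ} (hu : ∀ i, |u i| ≤ a i * r)
    (hw : ∀ j, |w j| ≤ b j * s) :
    |u ⬝ᵥ A *ᵥ w| ≤ (∑ i, ∑ j, a i * |A i j| * b j) * (r * s) := by
  calc |u ⬝ᵥ A *ᵥ w| ≤ ∑ i, ∑ j, |u i| * |A i j| * |w j| := by
        simp only [dotProduct, mulVec, mul_sum]
        refine (abs_sum_le_sum_abs _ _).trans (sum_le_sum fun i _ => ?_)
        refine (abs_sum_le_sum_abs _ _).trans (sum_le_sum fun j _ => ?_)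
        rw [abs_mul, abs_mul, mul_assoc]
    _ ≤ ∑ i, ∑ j, a i * r * |A i j| * (b j * s) := by
        gcongr with i _ j _
        · exact mul_nonneg ((abs_nonneg _).trans (hu i)) (abs_nonneg _)
        · exact hu i
        · exact hw j
    _ = (∑ i, ∑ j, a i * |A i j| * b j) * (r * s) := by
        simp only [sum_mul]
        exact sum_congr rfl fun i _ => sum_congr rfl fun j _ => by ring

variable {ι : Type*} [Fintype ι]

theorem mulVec_const_eq_zero {L : Matrix ι ι ℝ} (hrow : ∀ i, ∑ j, L i j = 0) (c : ℝ) :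
    L *ᵥ (fun _ => c) = 0 := by
  funext i
  simp [mulVec, dotProduct, ← sum_mul, hrow i]

theorem sum_mulVec_eq_zero {L : Matrix ι ι ℝ} (hcol : ∀ j, ∑ i, L i j = 0) (w : ι → ℝ) :
    ∑ i, (L *ᵥ w) i = 0 := by
  simp only [mulVec, dotProduct]
  rw [sum_comm]
  simp [← sum_mul, hcol]

theorem dotProduct_mulVec_sub_const {S : Matrix ι ι ℝ} (hrow : ∀ i, ∑ j, S i j = 0)
    (hcol : ∀ j, ∑ i, S i j = 0) (w : ι → ℝ) (c : ℝ) :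
    (w - fun _ => c) ⬝ᵥ S *ᵥ (w - fun _ => c) = w ⬝ᵥ S *ᵥ w := by
  rw [mulVec_sub, mulVec_const_eq_zero hrow, sub_zero, sub_dotProduct, sub_eq_self]
  simp [dotProduct, ← mul_sum, sum_mulVec_eq_zero hcol]

theorem exists_pos_mul_sum_sq_le_of_ker_eq_const (S : Matrix ι ι ℝ) (hS : Sᵀ = S)
    (hpsd : ∀ z : ι → ℝ, 0 ≤ z ⬝ᵥ S *ᵥ z)
    (hker : ∀ z : ι → ℝ, S *ᵥ z = 0 → ∃ c : ℝ, z = fun _ => c) :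
    ∃ μ > 0, ∀ z : ι → ℝ, ∑ i, z i = 0 → μ * ∑ i, z i ^ 2 ≤ z ⬝ᵥ S *ᵥ z := by
  have hS' : S.PosSemidef :=
    .of_dotProduct_mulVec_nonneg (by simpa [IsHermitian] using hS) (by simpa using hpsd)
  -- `S + 𝟙𝟙ᵀ` is positive definite, and agrees with `S` on `𝟙^⊥`.
  obtain ⟨μ, hμ, hle⟩ := exists_pos_mul_norm_sq_le
    (f := fun z : EuclideanSpace ℝ ι => (z : ι → ℝ) ⬝ᵥ S *ᵥ z + (∑ i, z i) ^ 2) (by fun_prop)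
    (fun c z => by simp [mulVec_smul, ← mul_sum]; ring) (fun z hz => by
      by_contra hle
      have hq : (z : ι → ℝ) ⬝ᵥ S *ᵥ z = 0 := by nlinarith [hpsd z, sq_nonneg (∑ i, z i)]
      have hsum : ∑ i, z i = 0 := by nlinarith [hpsd z, sq_nonneg (∑ i, z i)]
      obtain ⟨c, hc⟩ := hker z ((hS'.dotProduct_mulVec_zero_iff z).1 (by simpa using hq))
      refine hz (WithLp.ofLp_injective 2 (funext fun i => ?_))
      have hcard : (Fintype.card ι : ℝ) ≠ 0 := Nat.cast_ne_zero.2 (Fintype.card_pos_iff.2 ⟨i⟩).ne'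
      simp_all)
  refine ⟨μ, hμ, fun z hz => ?_⟩
  simpa [EuclideanSpace.real_norm_sq_eq, hz] using hle (WithLp.toLp 2 z)

theorem mul_sum_sq_le_dotProduct_mulVec_mul {S : Matrix ι ι ℝ} (hrow : ∀ i, ∑ j, S i j = 0)
    (hcol : ∀ j, ∑ i, S i j = 0) {μ : ℝ} (hμ : 0 ≤ μ)
    (hgap : ∀ z : ι → ℝ, ∑ i, z i = 0 → μ * ∑ i, z i ^ 2 ≤ z ⬝ᵥ S *ᵥ z)
    {z m : ι → ℝ} (hz : ∑ i, z i = 0) (hm : ∀ i, 1 ≤ m i) :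
    μ * ∑ i, z i ^ 2 ≤ (m * z) ⬝ᵥ S *ᵥ (m * z) := by
  set c := (∑ i, m i * z i) / Fintype.card ι
  set w : ι → ℝ := m * z - fun _ => c
  have hw : ∑ i, w i = 0 := by
    rcases isEmpty_or_nonempty ι with hι | hι
    · simp
    · have hcard : (Fintype.card ι : ℝ) ≠ 0 := Nat.cast_ne_zero.2 Fintype.card_ne_zero
      simp [w, sum_sub_distrib, c, mul_div_cancel₀, hcard]
  calc μ * ∑ i, z i ^ 2 ≤ μ * ∑ i, w i ^ 2 :=
        mul_le_mul_of_nonneg_left (Finset.sum_sq_le_sum_mul_sub_sq hz hm c) hμ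
    _ ≤ w ⬝ᵥ S *ᵥ w := hgap w hw
    _ = (m * z) ⬝ᵥ S *ᵥ (m * z) := dotProduct_mulVec_sub_const hrow hcol _ c

theorem sum_mul_sq_add_mul_neg_mulVec_le {L : Matrix ι ι ℝ} (hrow : ∀ i, ∑ j, L i j = 0)
    (hcol : ∀ j, ∑ i, L i j = 0) {μ : ℝ} (hμ : 0 ≤ μ)
    (hgap : ∀ z : ι → ℝ, ∑ i, z i = 0 → μ * ∑ i, z i ^ 2 ≤ z ⬝ᵥ (L + Lᵀ) *ᵥ z)
    {z m m' : ι → ℝ} (q : ι → ℝ) (η : ℝ) (hz : ∑ i, z i = 0) (hm : ∀ i, 1 ≤ m i)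
    (hm' : ∀ i, m' i ≤ 0) :
    ∑ i, (m' i * z i ^ 2 + m i * (2 * z i * (-(L *ᵥ (m * z + (fun _ => η) + q))) i))
      ≤ -μ * ∑ i, z i ^ 2 + 2 * |(m * z) ⬝ᵥ L *ᵥ q| := by
  have hrowS : ∀ i, ∑ j, (L + Lᵀ) i j = 0 := by simp [sum_add_distrib, hrow, hcol]
  have hcolS : ∀ j, ∑ i, (L + Lᵀ) i j = 0 := by simp [sum_add_distrib, hrow, hcol]
  have hquad := mul_sum_sq_le_dotProduct_mulVec_mul hrowS hcolS hμ hgap hz hm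
  have hsplit : ∑ i, m i * (2 * z i * (-(L *ᵥ (m * z + (fun _ => η) + q))) i)
      = -((m * z) ⬝ᵥ (L + Lᵀ) *ᵥ (m * z)) - 2 * ((m * z) ⬝ᵥ L *ᵥ q) := by
    rw [add_mulVec, dotProduct_add, dotProduct_transpose_mulVec, mulVec_add, mulVec_add,
      mulVec_const_eq_zero hrow]
    simp only [dotProduct, Pi.mul_apply, Pi.neg_apply, Pi.add_apply, add_zero]
    rw [mul_sum, ← sum_add_distrib, ← sum_neg_distrib, ← sum_sub_distrib]
    exact sum_congr rfl fun i _ => by ring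
  have hdecay : ∑ i, m' i * z i ^ 2 ≤ 0 :=
    sum_nonpos fun i _ => mul_nonpos_of_nonpos_of_nonneg (hm' i) (sq_nonneg _)
  rw [sum_add_distrib, hsplit]
  linarith [neg_abs_le ((m * z) ⬝ᵥ L *ᵥ q)]

end Matrix

section MaskedConsensus

variable {ι : Type*} (Φ Sg Δ γ : ι → ℝ) (η : ℝ)

noncomputable def gain (t : ℝ) : ι → ℝ := fun i => 1 + Φ i * exp (-Sg i * t)

noncomputable def maskResidual (t : ℝ) : ι → ℝ :=
  fun j => η * (Φ j * exp (-Sg j * t)) + gain Φ Sg t j * (exp (-Δ j * t) * γ j)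

def maskResidualBound : ι → ℝ := fun j => |η| * Φ j + (1 + Φ j) * |γ j|

variable {Φ Sg Δ γ η}

theorem gain_mem_Icc {t : ℝ} {i : ι} (hΦ : 0 ≤ Φ i) (hSg : 0 ≤ Sg i) (ht : 0 ≤ t) :
    gain Φ Sg t i ∈ Set.Icc 1 (1 + Φ i) := by
  have hexp : exp (-Sg i * t) ≤ 1 := exp_le_one_iff.2 (by nlinarith)
  constructor
  · have := exp_pos (-Sg i * t)
    simp only [gain]
    nlinarith
  · simp only [gain]
    nlinarith

theorem gain_mul_add_eq (t : ℝ) (x : ι → ℝ) :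
    (fun i => (1 + Φ i * exp (-Sg i * t)) * (x i + exp (-Δ i * t) * γ i))
      = gain Φ Sg t * (fun i => x i - η) + (fun _ => η) + maskResidual Φ Sg Δ γ η t := by
  funext i
  simp only [gain, maskResidual, Pi.add_apply, Pi.mul_apply]
  ring

theorem abs_maskResidual_le {δ t : ℝ} {j : ι} (hΦ : 0 ≤ Φ j) (hSg : δ ≤ Sg j) (hΔ : δ ≤ Δ j)
    (hδ : 0 ≤ δ) (ht : 0 ≤ t) :
    |maskResidual Φ Sg Δ γ η t j| ≤ maskResidualBound Φ γ η j * exp (-δ * t) := by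
  have hm := gain_mem_Icc (t := t) hΦ (hδ.trans hSg) ht
  have hSgδ : exp (-Sg j * t) ≤ exp (-δ * t) := exp_le_exp.2 (by nlinarith)
  have hΔδ : exp (-Δ j * t) ≤ exp (-δ * t) := exp_le_exp.2 (by nlinarith)
  calc |maskResidual Φ Sg Δ γ η t j|
        ≤ |η| * (Φ j * exp (-Sg j * t)) + gain Φ Sg t j * (exp (-Δ j * t) * |γ j|) := by
        refine (abs_add_le _ _).trans_eq ?_
        rw [abs_mul, abs_mul, abs_mul, abs_mul, abs_of_nonneg hΦ, abs_of_pos (exp_pos _),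
          abs_of_pos (exp_pos _), abs_of_pos (one_pos.trans_le hm.1)]
    _ ≤ |η| * (Φ j * exp (-δ * t)) + (1 + Φ j) * (exp (-δ * t) * |γ j|) := by
        gcongr
        exact hm.2
    _ = maskResidualBound Φ γ η j * exp (-δ * t) := by
        simp only [maskResidualBound]
        ring

theorem abs_gain_mul_dotProduct_mulVec_maskResidual_le [Fintype ι] (L : Matrix ι ι ℝ)
    (z : ι → ℝ) {δ t : ℝ} (hΦ : ∀ i, 0 ≤ Φ i) (hSg : ∀ i, δ ≤ Sg i) (hΔ : ∀ i, δ ≤ Δ i)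
    (hδ : 0 ≤ δ) (ht : 0 ≤ t) :
    |(gain Φ Sg t * z) ⬝ᵥ L *ᵥ maskResidual Φ Sg Δ γ η t|
      ≤ (∑ i, ∑ j, (1 + Φ i) * |L i j| * maskResidualBound Φ γ η j)
        * (√(∑ i, z i ^ 2) * exp (-δ * t)) := by
  refine abs_dotProduct_mulVec_le (fun i => ?_)
    fun j => abs_maskResidual_le (hΦ j) (hSg j) (hΔ j) hδ ht
  have hm := gain_mem_Icc (t := t) (hΦ i) (hδ.trans (hSg i)) ht
  rw [Pi.mul_apply, abs_mul, abs_of_pos (one_pos.trans_le hm.1)]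
  exact mul_le_mul hm.2 (abs_le_sqrt_sum_sq z i) (abs_nonneg _) (by linarith [hΦ i])

end MaskedConsensus

theorem stmt12_general {n : ℕ} (L : Matrix (Fin n) (Fin n) ℝ)
    (hrow : ∀ i, ∑ j, L i j = 0) (hcol : ∀ j, ∑ i, L i j = 0)
    (hpsd : ∀ z : Fin n → ℝ, 0 ≤ z ⬝ᵥ (L + Lᵀ).mulVec z)
    (hker : ∀ z : Fin n → ℝ, (L + Lᵀ).mulVec z = 0 ↔ ∃ cst : ℝ, z = fun _ => cst)
    (Φ Sg Δ γ : Fin n → ℝ)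
    (hΦ : ∀ i, 0 < Φ i) (hSg : ∀ i, 0 < Sg i) (hΔ : ∀ i, 0 < Δ i)
    (η : ℝ) :
    ∃ a b c δ : ℝ, 0 < a ∧ 0 < b ∧ 0 < c ∧ 0 < δ ∧
      ∀ x : ℝ → Fin n → ℝ,
        (∀ t, HasDerivAt x
          (-(L.mulVec fun i =>
            (1 + Φ i * Real.exp (-Sg i * t)) * (x t i + Real.exp (-Δ i * t) * γ i))) t) →
        (∑ i, x 0 i = n * η) →
        ∀ t, 0 ≤ t →
          deriv (fun s => ∑ i, (1 + Φ i * Real.exp (-Sg i * s)) * (x s i - η) ^ 2) t ≤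
            -a * (∑ i, (x t i - η) ^ 2) +
              b * Real.sqrt (∑ i, (x t i - η) ^ 2) * Real.exp (-δ * t) +
              c * Real.exp (-δ * t) := by
  obtain ⟨μ, hμ, hgap⟩ := exists_pos_mul_sum_sq_le_of_ker_eq_const (L + Lᵀ)
    (by rw [transpose_add, transpose_transpose, add_comm]) hpsd fun z => (hker z).1
  obtain ⟨δ, hδ, hδle⟩ := Finite.exists_pos_forall_le fun i => lt_min (hSg i) (hΔ i)
  set B := ∑ i, ∑ j, (1 + Φ i) * |L i j| * maskResidualBound Φ γ η j
  have hB : 0 ≤ B := sum_nonneg fun i _ => sum_nonneg fun j _ => by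
    have := hΦ i; have := hΦ j; simp only [maskResidualBound]; positivity
  refine ⟨μ, 2 * B + 1, 1, δ, hμ, by positivity, one_pos, hδ, fun x hx hx0 t ht => ?_⟩
  set z : Fin n → ℝ := fun i => x t i - η
  have hz : ∑ i, z i = 0 := by
    have hcons := sum_eq_of_hasDerivAt_of_sum_eq_zero hx
      (fun s => by simp only [Pi.neg_apply, sum_neg_distrib, sum_mulVec_eq_zero hcol, neg_zero]) t 0
    simp [z, sum_sub_distrib, hcons, hx0]
  have hcross := abs_gain_mul_dotProduct_mulVec_maskResidual_le (η := η) (Δ := Δ) (γ := γ) L z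
    (fun i => (hΦ i).le) (fun i => (hδle i).trans (min_le_left _ _))
    (fun i => (hδle i).trans (min_le_right _ _)) hδ.le ht
  have hest := sum_mul_sq_add_mul_neg_mulVec_le hrow hcol hμ.le hgap
    (m' := fun i => -(Φ i * Sg i * exp (-Sg i * t))) (maskResidual Φ Sg Δ γ η t) η hz
    (fun i => (gain_mem_Icc (hΦ i).le (hSg i).le ht).1)
    fun i => neg_nonpos.2 (mul_pos (mul_pos (hΦ i) (hSg i)) (exp_pos _)).le
  rw [← gain_mul_add_eq] at hest
  have hV := HasDerivAt.sum_mul_sub_sq (hx t)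
    (fun i => hasDerivAt_one_add_mul_exp (Φ i) (Sg i) t) η
  refine hV.deriv.le.trans (hest.trans ?_)
  nlinarith [mul_nonneg (sqrt_nonneg (∑ i, z i ^ 2)) (exp_pos (-δ * t)).le, exp_pos (-δ * t)]

/-- Key Lyapunov estimate in Theorem 3 (privacy-preserving average consensus): along
solutions of the masked consensus system, the time-varying Lyapunov function
`V(t,x) = (x-η𝟙)ᵀ(I+Φe^{-Σt})(x-η𝟙)` has derivative bounded by
`-a‖x-η𝟙‖² + b‖x-η𝟙‖e^{-δt} + c e^{-δt}`. -/
theorem stmt12 {n : ℕ} (hn : 0 < n) (L : Matrix (Fin n) (Fin n) ℝ)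
    (hrow : ∀ i, ∑ j, L i j = 0) (hcol : ∀ j, ∑ i, L i j = 0)
    (hoff : ∀ i j, i ≠ j → L i j ≤ 0)
    (hpsd : ∀ z : Fin n → ℝ, 0 ≤ z ⬝ᵥ (L + Lᵀ).mulVec z)
    (hker : ∀ z : Fin n → ℝ, (L + Lᵀ).mulVec z = 0 ↔ ∃ cst : ℝ, z = fun _ => cst)
    (Φ Sg Δ γ : Fin n → ℝ)
    (hΦ : ∀ i, 0 < Φ i) (hSg : ∀ i, 0 < Sg i) (hΔ : ∀ i, 0 < Δ i)
    (η : ℝ) :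
    ∃ a b c δ : ℝ, 0 < a ∧ 0 < b ∧ 0 < c ∧ 0 < δ ∧
      ∀ x : ℝ → Fin n → ℝ,
        (∀ t, HasDerivAt x
          (-(L.mulVec fun i =>
            (1 + Φ i * Real.exp (-Sg i * t)) * (x t i + Real.exp (-Δ i * t) * γ i))) t) →
        (∑ i, x 0 i = n * η) →
        ∀ t, 0 ≤ t →
          deriv (fun s => ∑ i, (1 + Φ i * Real.exp (-Sg i * s)) * (x s i - η) ^ 2) t ≤
            -a * (∑ i, (x t i - η) ^ 2) +
              b * Real.sqrt (∑ i, (x t i - η) ^ 2) * Real.exp (-δ * t) +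
              c * Real.exp (-δ * t) :=
  stmt12_general L hrow hcol hpsd hker Φ Sg Δ γ hΦ hSg hΔ η
end

section
/- Let L be an n×n real matrix with L + Lᵀ positive semidefinite with kernel exactly span(𝟙), let λ₂ > 0 be the smallest nonzero eigenvalue of L + Lᵀ, and let D(t) = I + Φe^{-Σt} with Φ, Σ diagonal with positive entries, σ_min the smallest entry of Σ. Then for every t ≥ 0 and every z with 𝟙ᵀz = 0, zᵀ(I+Φe^{-Σt})(L+Lᵀ)(I+Φe^{-Σt})z ≥ λ₂‖(I+Φe^{-Σt})z‖² - λ₂(𝟙ᵀ(I+Φe^{-Σt})z/√n)², and consequently zᵀ(I+Φe^{-Σt})(L+Lᵀ)(I+Φe^{-Σt})z ≥ λ₂(1 - ‖Φ‖²e^{-2σ_min t})‖z‖². -/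
open Real Filter Matrix

/-- Quantitative quadratic-term estimate in the proof of Theorem 3: for `z ⊥ 𝟙`,
`zᵀ(I+Φe^{-Σt})(L+Lᵀ)(I+Φe^{-Σt})z ≥ λ₂(1 - ‖Φ‖²e^{-2σmin t})‖z‖²`. -/
theorem stmt18 {n : ℕ} (hn : 0 < n) (L : Matrix (Fin n) (Fin n) ℝ)
    (hpsd : ∀ w : Fin n → ℝ, 0 ≤ w ⬝ᵥ (L + Lᵀ).mulVec w)
    (lam₂ : ℝ) (hlam₂ : 0 < lam₂)
    (hgap : ∀ w : Fin n → ℝ,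
      lam₂ * ((∑ i, w i ^ 2) - (∑ i, w i) ^ 2 / n) ≤ w ⬝ᵥ (L + Lᵀ).mulVec w)
    (φ σv : Fin n → ℝ) (hφ : ∀ j, 0 < φ j) (hσ : ∀ j, 0 < σv j)
    (φmax σmin : ℝ) (hφmax : ∀ j, φ j ≤ φmax) (hφmax0 : 0 ≤ φmax)
    (hσmin : 0 < σmin) (hσle : ∀ j, σmin ≤ σv j) :
    ∀ t, 0 ≤ t → ∀ z : Fin n → ℝ, (∑ i, z i) = 0 →
      lam₂ * (1 - φmax ^ 2 * Real.exp (-2 * σmin * t)) * (∑ i, z i ^ 2) ≤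
        (fun i => (1 + φ i * Real.exp (-σv i * t)) * z i) ⬝ᵥ
          (L + Lᵀ).mulVec (fun i => (1 + φ i * Real.exp (-σv i * t)) * z i) := by
  intro t ht z hz
  set a : Fin n → ℝ := fun i => φ i * Real.exp (-σv i * t) with ha
  set w : Fin n → ℝ := fun i => (1 + a i) * z i with hw
  have key := hgap w
  refine le_trans ?_ key
  have hlam := hlam₂.le
  have ha0 : ∀ i, 0 ≤ a i := fun i => mul_nonneg (hφ i).le (Real.exp_pos _).le
  have haA : ∀ i, a i ≤ φmax * Real.exp (-σmin * t) := by
    intro i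
    exact mul_le_mul (hφmax i) (Real.exp_le_exp.mpr (by nlinarith [hσle i])) (Real.exp_pos _).le hφmax0
  have hS : (0:ℝ) ≤ ∑ i, z i ^ 2 := Finset.sum_nonneg fun i _ => sq_nonneg _
  -- sum of w
  have hsumw : (∑ i, w i) = ∑ i, a i * z i := by
    simp only [hw, add_mul, one_mul]
    rw [Finset.sum_add_distrib, hz, zero_add]
  -- Cauchy-Schwarz
  have hcs : (∑ i, a i * z i) ^ 2 ≤ (∑ i, (a i) ^ 2) * ∑ i, z i ^ 2 :=
    Finset.sum_mul_sq_le_sq_mul_sq Finset.univ a z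
  have ha2 : (∑ i, (a i) ^ 2) ≤ n * (φmax ^ 2 * Real.exp (-2 * σmin * t)) := by
    have : ∀ i, (a i) ^ 2 ≤ φmax ^ 2 * Real.exp (-2 * σmin * t) := by
      intro i
      have h1 : (a i) ^ 2 ≤ (φmax * Real.exp (-σmin * t)) ^ 2 :=
        pow_le_pow_left₀ (ha0 i) (haA i) 2
      have h2 : (φmax * Real.exp (-σmin * t)) ^ 2 = φmax ^ 2 * Real.exp (-2 * σmin * t) := by
        rw [mul_pow, sq (Real.exp _), ← Real.exp_add]; ring_nf
      linarith
    calc (∑ i, (a i) ^ 2) ≤ ∑ _i : Fin n, (φmax ^ 2 * Real.exp (-2 * σmin * t)) :=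
          Finset.sum_le_sum fun i _ => this i
      _ = n * (φmax ^ 2 * Real.exp (-2 * σmin * t)) := by
          rw [Finset.sum_const, Finset.card_univ, Fintype.card_fin, nsmul_eq_mul]
  have hn' : (0:ℝ) < n := by exact_mod_cast hn
  have hdiv : (∑ i, w i) ^ 2 / n ≤ φmax ^ 2 * Real.exp (-2 * σmin * t) * ∑ i, z i ^ 2 := by
    rw [hsumw, div_le_iff₀ hn']
    calc (∑ i, a i * z i) ^ 2 ≤ (∑ i, (a i) ^ 2) * ∑ i, z i ^ 2 := hcs
      _ ≤ (n * (φmax ^ 2 * Real.exp (-2 * σmin * t))) * ∑ i, z i ^ 2 :=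
          mul_le_mul_of_nonneg_right ha2 hS
      _ = φmax ^ 2 * Real.exp (-2 * σmin * t) * (∑ i, z i ^ 2) * n := by ring
  have hw2 : (∑ i, z i ^ 2) ≤ ∑ i, w i ^ 2 := by
    apply Finset.sum_le_sum
    intro i _
    have h1 : (1:ℝ) ≤ (1 + a i) ^ 2 := by nlinarith [ha0 i]
    have : w i ^ 2 = (1 + a i) ^ 2 * z i ^ 2 := by rw [hw]; ring
    nlinarith [sq_nonneg (z i)]
  have : (1 - φmax ^ 2 * Real.exp (-2 * σmin * t)) * (∑ i, z i ^ 2) ≤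
      (∑ i, w i ^ 2) - (∑ i, w i) ^ 2 / n := by nlinarith
  nlinarith [mul_le_mul_of_nonneg_left this hlam]
end

section
/- Let f : ℝⁿ → ℝⁿ be Lipschitz and let u : [0,∞) → ℝⁿ be continuous with u(t) → 0 as t → ∞. If x : [0,∞) → ℝⁿ is a bounded solution of ẋ = f(x) + u(t), and the system ẋ = f(x) has x* = 0 globally asymptotically stable with a C¹ Lyapunov function V satisfying b₁‖x‖² ≤ V(x) ≤ b₂‖x‖², ∇V·f ≤ -b₃‖x‖², ‖∇V‖ ≤ b₄‖x‖ (b₁,…,b₄ > 0), and in addition ‖u(t)‖ ≤ c·e^{-δt} for some c, δ > 0, then x(t) → 0 as t → ∞. -/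
/-!
Along a solution, `v(t) = V(x(t))` satisfies `v' ≤ -b₃‖x‖² + b₄‖x‖‖u‖ ≤ -α v + K e^{-δt}`,
with `K = b₄ M c` for a bound `M` on `‖x‖`, and `α ≤ b₃ / b₂`. Choosing `α < δ`, the function
`e^{αt} v(t) + K/(δ-α) e^{-(δ-α)t}` is nonincreasing, so `v`, and hence `‖x‖²`, decays like `e^{-αt}`.
-/

open Real Filter Topology

theorem le_mul_exp_of_hasDerivAt_le_neg_mul_add_exp {v v' : ℝ → ℝ} {α δ K : ℝ}
    (hαδ : α < δ) (hK : 0 ≤ K) (hv : ∀ t, 0 ≤ t → HasDerivAt v (v' t) t)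
    (hv' : ∀ t, 0 ≤ t → v' t ≤ -α * v t + K * exp (-δ * t)) {t : ℝ} (ht : 0 ≤ t) :
    v t ≤ (v 0 + K / (δ - α)) * exp (-α * t) := by
  set β := δ - α
  have hβ : 0 < β := sub_pos.2 hαδ
  set g : ℝ → ℝ := fun s => exp (α * s) * v s + K / β * exp (-β * s)
  set g' : ℝ → ℝ := fun s => exp (α * s) * (v' s + α * v s) - K * exp (-β * s)
  have hg : ∀ s, 0 ≤ s → HasDerivAt g (g' s) s := by
    intro s hs
    have hexp : ∀ a : ℝ, HasDerivAt (fun s => exp (a * s)) (exp (a * s) * a) s := fun a => by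
      simpa using ((hasDerivAt_id s).const_mul a).exp
    refine (((hexp α).mul (hv s hs)).add ((hexp (-β)).const_mul (K / β))).congr_deriv ?_
    simp only [g']
    field_simp
    ring
  have hg'_nonpos : ∀ s, 0 ≤ s → g' s ≤ 0 := by
    intro s hs
    have hforcing : exp (α * s) * (K * exp (-δ * s)) = K * exp (-β * s) := by
      rw [mul_left_comm, ← exp_add, show α * s + -δ * s = -β * s by ring]
    calc exp (α * s) * (v' s + α * v s) - K * exp (-β * s)
        ≤ exp (α * s) * (K * exp (-δ * s)) - K * exp (-β * s) := by
          gcongr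
          linarith [hv' s hs]
      _ = 0 := by rw [hforcing, sub_self]
  have hg_anti : AntitoneOn g (Set.Ici 0) := by
    refine antitoneOn_of_hasDerivWithinAt_nonpos (f' := g') (convex_Ici 0)
      (HasDerivAt.continuousOn hg) (fun s hs => ?_) (fun s hs => ?_)
    all_goals rw [interior_Ici] at hs
    · exact (hg s (le_of_lt hs)).hasDerivWithinAt
    · exact hg'_nonpos s (le_of_lt hs)
  have hgt : exp (α * t) * v t ≤ v 0 + K / β := by
    have h := hg_anti Set.self_mem_Ici ht ht
    simp only [g, mul_zero, exp_zero, one_mul, mul_one] at h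
    have : 0 ≤ K / β * exp (-β * t) := by positivity
    linarith
  calc v t = exp (α * t) * v t * exp (-α * t) := by
        rw [mul_right_comm, ← exp_add]
        simp
    _ ≤ (v 0 + K / β) * exp (-α * t) := by gcongr

theorem tendsto_nhds_zero_of_sq_norm_le_mul_exp {E : Type*} [NormedAddCommGroup E]
    {x : ℝ → E} {C α : ℝ} (hα : 0 < α) (hx : ∀ᶠ t in atTop, ‖x t‖ ^ 2 ≤ C * exp (-α * t)) :
    Tendsto x atTop (𝓝 0) := by
  have hexp : Tendsto (fun t => C * exp (-α * t)) atTop (𝓝 0) := by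
    simpa using (tendsto_exp_atBot.comp
      (tendsto_id.const_mul_atTop_of_neg (neg_neg_iff_pos.2 hα))).const_mul C
  have hsq : Tendsto (fun t => ‖x t‖ ^ 2) atTop (𝓝 0) :=
    squeeze_zero' (Eventually.of_forall fun t => by positivity) hx hexp
  rw [tendsto_zero_iff_norm_tendsto_zero]
  simpa [Real.sqrt_sq (norm_nonneg _)] using hsq.sqrt

theorem fderiv_apply_add_le {E : Type*} [NormedAddCommGroup E] [NormedSpace ℝ E]
    {V : E → ℝ} {f : E → E} {b₃ b₄ : ℝ}
    (hVder : ∀ y, fderiv ℝ V y (f y) ≤ -b₃ * ‖y‖ ^ 2)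
    (hVgrad : ∀ y, ‖fderiv ℝ V y‖ ≤ b₄ * ‖y‖) (y w : E) :
    fderiv ℝ V y (f y + w) ≤ -b₃ * ‖y‖ ^ 2 + b₄ * ‖y‖ * ‖w‖ := by
  have hw : fderiv ℝ V y w ≤ b₄ * ‖y‖ * ‖w‖ :=
    calc fderiv ℝ V y w ≤ ‖fderiv ℝ V y‖ * ‖w‖ := (le_abs_self _).trans ((fderiv ℝ V y).le_opNorm w)
      _ ≤ b₄ * ‖y‖ * ‖w‖ := by gcongr; exact hVgrad y
  rw [map_add]
  linarith [hVder y]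

theorem stmt19_general {n : ℕ} (f : EuclideanSpace ℝ (Fin n) → EuclideanSpace ℝ (Fin n))
    (u : ℝ → EuclideanSpace ℝ (Fin n))
    (c δ : ℝ) (hcp : 0 < c) (hδ : 0 < δ)
    (hud : ∀ t, 0 ≤ t → ‖u t‖ ≤ c * Real.exp (-δ * t))
    (V : EuclideanSpace ℝ (Fin n) → ℝ) (hV : ContDiff ℝ 1 V)
    (b₁ b₂ b₃ b₄ : ℝ) (hb₁ : 0 < b₁) (hb₂ : 0 < b₂) (hb₃ : 0 < b₃) (hb₄ : 0 < b₄)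
    (hVbound : ∀ x, b₁ * ‖x‖ ^ 2 ≤ V x ∧ V x ≤ b₂ * ‖x‖ ^ 2)
    (hVder : ∀ x, fderiv ℝ V x (f x) ≤ -b₃ * ‖x‖ ^ 2)
    (hVgrad : ∀ x, ‖fderiv ℝ V x‖ ≤ b₄ * ‖x‖)
    (x : ℝ → EuclideanSpace ℝ (Fin n))
    (hx : ∀ t, 0 ≤ t → HasDerivAt x (f (x t) + u t) t)
    (hxbdd : ∃ M : ℝ, ∀ t, 0 ≤ t → ‖x t‖ ≤ M) :
    Filter.Tendsto x atTop (nhds 0) := by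
  obtain ⟨M, hM⟩ := hxbdd
  have hM0 : 0 ≤ M := (norm_nonneg _).trans (hM 0 le_rfl)
  set α := min (b₃ / b₂) (δ / 2)
  have hα : 0 < α := lt_min (by positivity) (by positivity)
  have hαb : α * b₂ ≤ b₃ := (le_div_iff₀ hb₂).1 (min_le_left _ _)
  have hVx : ∀ t, 0 ≤ t → HasDerivAt (V ∘ x) (fderiv ℝ V (x t) (f (x t) + u t)) t :=
    fun t ht => ((hV.differentiable one_ne_zero) (x t)).hasFDerivAt.comp_hasDerivAt t (hx t ht)
  have hVx_le : ∀ t, 0 ≤ t →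
      fderiv ℝ V (x t) (f (x t) + u t) ≤ -α * V (x t) + b₄ * M * c * exp (-δ * t) := by
    intro t ht
    have hdecay : α * V (x t) ≤ b₃ * ‖x t‖ ^ 2 := by
      nlinarith [(hVbound (x t)).2, sq_nonneg ‖x t‖]
    have hinput : b₄ * ‖x t‖ * ‖u t‖ ≤ b₄ * M * (c * exp (-δ * t)) := by
      gcongr
      exacts [hM t ht, hud t ht]
    linarith [fderiv_apply_add_le hVder hVgrad (x t) (u t)]
  refine tendsto_nhds_zero_of_sq_norm_le_mul_exp (C := (V (x 0) + b₄ * M * c / (δ - α)) / b₁) hα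
    (eventually_ge_atTop 0 |>.mono fun t ht => ?_)
  rw [div_mul_eq_mul_div, le_div_iff₀ hb₁, mul_comm]
  exact (hVbound (x t)).1.trans <| le_mul_exp_of_hasDerivAt_le_neg_mul_add_exp
    (by linarith [min_le_right (b₃ / b₂) (δ / 2)]) (by positivity) hVx hVx_le ht

/-- Converging-input converging-state property underlying Theorem 1: a globally
exponentially stable system (witnessed by a quadratic-type Lyapunov function with
linearly bounded gradient) driven by an exponentially decaying input has all bounded
solutions converging to the origin. -/
theorem stmt19 {n : ℕ} (f : EuclideanSpace ℝ (Fin n) → EuclideanSpace ℝ (Fin n))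
    (Lf : NNReal) (hf : LipschitzWith Lf f) (hf0 : f 0 = 0)
    (u : ℝ → EuclideanSpace ℝ (Fin n)) (hu : Continuous u)
    (hu0 : Filter.Tendsto u atTop (nhds 0))
    (c δ : ℝ) (hcp : 0 < c) (hδ : 0 < δ)
    (hud : ∀ t, 0 ≤ t → ‖u t‖ ≤ c * Real.exp (-δ * t))
    (V : EuclideanSpace ℝ (Fin n) → ℝ) (hV : ContDiff ℝ 1 V)
    (b₁ b₂ b₃ b₄ : ℝ) (hb₁ : 0 < b₁) (hb₂ : 0 < b₂) (hb₃ : 0 < b₃) (hb₄ : 0 < b₄)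
    (hVbound : ∀ x, b₁ * ‖x‖ ^ 2 ≤ V x ∧ V x ≤ b₂ * ‖x‖ ^ 2)
    (hVder : ∀ x, fderiv ℝ V x (f x) ≤ -b₃ * ‖x‖ ^ 2)
    (hVgrad : ∀ x, ‖fderiv ℝ V x‖ ≤ b₄ * ‖x‖)
    (x : ℝ → EuclideanSpace ℝ (Fin n))
    (hx : ∀ t, 0 ≤ t → HasDerivAt x (f (x t) + u t) t)
    (hxbdd : ∃ M : ℝ, ∀ t, 0 ≤ t → ‖x t‖ ≤ M) :
    Filter.Tendsto x atTop (nhds 0) :=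
  stmt19_general f u c δ hcp hδ hud V hV b₁ b₂ b₃ b₄ hb₁ hb₂ hb₃ hb₄ hVbound hVder hVgrad x hx hxbdd
end
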